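/- Let E, F, G be Banach spaces, U ⊆ E × F open, and f : U → G continuously Fréchet differentiable. Let V ⊆ E be open and u : V → F be a continuous function such that for all x ∈ V: (x, u(x)) ∈ U, f(x, u(x)) = 0, and the partial derivative D₂f(x, u(x)) : F → G is a continuous linear homeomorphism. Then u is continuously Fréchet differentiable on V, and for all x ∈ V and h ∈ E, Du(x)[h] = -(D₂f(x, u(x)))⁻¹ (D₁f(x, u(x))[h]). -/

import Mathlib

/-!
Near each `x₀ ∈ V`, the implicit function theorem gives a `C¹` map `ψ` whose graph is exactly the
zero set of `f` around `(x₀, u x₀)`. Since `u` is continuous, its graph stays in that neighbourhood,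
so `u` agrees with `ψ` near `x₀` and inherits its regularity and its derivative
`-(D₂f)⁻¹ ∘ D₁f`.
-/

open Filter Topology
open scoped ContDiff

namespace ContDiffAt

variable {𝕜 : Type*} [RCLike 𝕜]
  {E₁ : Type*} [NormedAddCommGroup E₁] [NormedSpace 𝕜 E₁] [CompleteSpace E₁]
  {E₂ : Type*} [NormedAddCommGroup E₂] [NormedSpace 𝕜 E₂] [CompleteSpace E₂]
  {F : Type*} [NormedAddCommGroup F] [NormedSpace 𝕜 F] [CompleteSpace F]
  {n : ℕ∞ω} {f : E₁ × E₂ → F} {g : E₁ → E₂} {x₀ : E₁}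

theorem eventuallyEq_implicitFunction (cdf : ContDiffAt 𝕜 n f (x₀, g x₀)) (pn : n ≠ 0)
    (if₂ : (fderiv 𝕜 f (x₀, g x₀) ∘L .inr 𝕜 E₁ E₂).IsInvertible)
    (hg : ContinuousAt g x₀) (hfg : ∀ᶠ x in 𝓝 x₀, f (x, g x) = f (x₀, g x₀)) :
    g =ᶠ[𝓝 x₀] cdf.implicitFunction pn if₂ := by
  have hgraph : Tendsto (fun x => (x, g x)) (𝓝 x₀) (𝓝 (x₀, g x₀)) :=
    continuousAt_id.prodMk hg
  filter_upwards [hgraph.eventually (cdf.eventually_apply_eq_iff_implicitFunction pn if₂), hfg]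
    with x hiff hx
  exact (hiff.mp hx).symm

theorem contDiffAt_of_eventually_apply_eq (cdf : ContDiffAt 𝕜 n f (x₀, g x₀)) (pn : n ≠ 0)
    (if₂ : (fderiv 𝕜 f (x₀, g x₀) ∘L .inr 𝕜 E₁ E₂).IsInvertible)
    (hg : ContinuousAt g x₀) (hfg : ∀ᶠ x in 𝓝 x₀, f (x, g x) = f (x₀, g x₀)) :
    ContDiffAt 𝕜 n g x₀ :=
  (cdf.contDiffAt_implicitFunction pn if₂).congr_of_eventuallyEq
    (cdf.eventuallyEq_implicitFunction pn if₂ hg hfg)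

theorem hasFDerivAt_of_eventually_apply_eq (cdf : ContDiffAt 𝕜 n f (x₀, g x₀)) (pn : n ≠ 0)
    (if₂ : (fderiv 𝕜 f (x₀, g x₀) ∘L .inr 𝕜 E₁ E₂).IsInvertible)
    (hg : ContinuousAt g x₀) (hfg : ∀ᶠ x in 𝓝 x₀, f (x, g x) = f (x₀, g x₀)) :
    HasFDerivAt g (-(fderiv 𝕜 f (x₀, g x₀) ∘L .inr 𝕜 E₁ E₂).inverse ∘L
      (fderiv 𝕜 f (x₀, g x₀) ∘L .inl 𝕜 E₁ E₂)) x₀ :=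
  (cdf.hasStrictFDerivAt_implicitFunction pn if₂).hasFDerivAt.congr_of_eventuallyEq
    (cdf.eventuallyEq_implicitFunction pn if₂ hg hfg)

end ContDiffAt

/-- Implicit-function-theorem formula for the derivative of an implicitly
defined map between Banach spaces. -/
theorem stmt_0
    {E F G : Type*} [NormedAddCommGroup E] [NormedSpace ℝ E] [CompleteSpace E]
    [NormedAddCommGroup F] [NormedSpace ℝ F] [CompleteSpace F]
    [NormedAddCommGroup G] [NormedSpace ℝ G] [CompleteSpace G]
    (U : Set (E × F)) (hU : IsOpen U)
    (f : E × F → G) (hf : ContDiffOn ℝ 1 f U)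
    (V : Set E) (hV : IsOpen V)
    (u : E → F) (hu : ContinuousOn u V)
    (hmem : ∀ x ∈ V, (x, u x) ∈ U)
    (hzero : ∀ x ∈ V, f (x, u x) = 0)
    (D2 : E → (F ≃L[ℝ] G))
    (hD2 : ∀ x ∈ V, ∀ s : F, D2 x s = fderiv ℝ f (x, u x) (0, s)) :
    ContDiffOn ℝ 1 u V ∧
      ∀ x ∈ V, ∀ h : E,
        fderiv ℝ u x h = -((D2 x).symm (fderiv ℝ f (x, u x) (h, 0))) := by
  have hcdf (x : E) (hx : x ∈ V) : ContDiffAt ℝ 1 f (x, u x) :=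
    hf.contDiffAt (hU.mem_nhds (hmem x hx))
  have hinr (x : E) (hx : x ∈ V) :
      fderiv ℝ f (x, u x) ∘L .inr ℝ E F = (D2 x : F →L[ℝ] G) := by
    ext s
    exact (hD2 x hx s).symm
  have if₂ (x : E) (hx : x ∈ V) : (fderiv ℝ f (x, u x) ∘L .inr ℝ E F).IsInvertible := by
    rw [hinr x hx]
    exact ContinuousLinearMap.isInvertible_equiv
  have hcont (x : E) (hx : x ∈ V) : ContinuousAt u x := hu.continuousAt (hV.mem_nhds hx)
  have hlevel (x : E) (hx : x ∈ V) : ∀ᶠ y in 𝓝 x, f (y, u y) = f (x, u x) := by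
    filter_upwards [hV.mem_nhds hx] with y hy
    rw [hzero y hy, hzero x hx]
  refine ⟨fun x hx => ?_, fun x hx h => ?_⟩
  · exact ((hcdf x hx).contDiffAt_of_eventually_apply_eq one_ne_zero (if₂ x hx) (hcont x hx)
      (hlevel x hx)).contDiffWithinAt
  · rw [((hcdf x hx).hasFDerivAt_of_eventually_apply_eq one_ne_zero (if₂ x hx) (hcont x hx)
      (hlevel x hx)).fderiv, hinr x hx, ContinuousLinearMap.inverse_equiv]
    rfl
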